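/- arXiv:math/9808075 — 3 statements merged into one kernel-verified Lean document; each statement's English description precedes it below -/
import Mathlib

section
/- Let A be a bialgebra over a field k generated by elements t^i_j and e_i (i, j in a finite index set) with relations R₁₂T₁T₂ = T₂T₁R₁₂ and E₁T₂ = T₂E₁R₁₂ (in matrix notation), comultiplication Δ(t^i_j) = t^i_k ⊗ t^k_j, Δ(e_i) = e_k ⊗ t^k_i + 1 ⊗ e_i, and counit ε(t^i_j) = δ^i_j, ε(e_i) = 0. Then Δ and ε are well-defined algebra homomorphisms, i.e., they preserve the defining relations, making A a bialgebra. -/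
open TensorProduct Matrix

section YangBaxterAlgebra

variable (k : Type*) [Field k] (ι : Type*) [Fintype ι] [DecidableEq ι]
variable (Rm : Matrix (ι × ι) (ι × ι) k)

/-- `R ⊗ 1` acting on factors 1,2 of the triple tensor product (in components). -/
def M12 : Matrix (ι × ι × ι) (ι × ι × ι) k :=
  fun a b => Rm (a.1, a.2.1) (b.1, b.2.1) * (if a.2.2 = b.2.2 then 1 else 0)

/-- `1 ⊗ R` acting on factors 2,3 of the triple tensor product (in components). -/
def M23 : Matrix (ι × ι × ι) (ι × ι × ι) k :=
  fun a b => (if a.1 = b.1 then (1 : k) else 0) * Rm (a.2.1, a.2.2) (b.2.1, b.2.2)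

/-- `R` acting on factors 1,3 of the triple tensor product (in components). -/
def M13 : Matrix (ι × ι × ι) (ι × ι × ι) k :=
  fun a b => Rm (a.1, a.2.2) (b.1, b.2.2) * (if a.2.1 = b.2.1 then 1 else 0)

/-- The Yang-Baxter equation `R₁₂R₁₃R₂₃ = R₂₃R₁₃R₁₂` in components. -/
def IsYangBaxter : Prop :=
  M12 k ι Rm * M13 k ι Rm * M23 k ι Rm = M23 k ι Rm * M13 k ι Rm * M12 k ι Rm

/-- Free generators: `Sum.inl (i,j)` is the matrix generator (`t^i_j` resp.
`u^i_j`), `Sum.inr i` is the extra generator (`E_i` resp. `F^i`). -/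
abbrev YGen := (ι × ι) ⊕ ι

/-- The free matrix generator. -/
def tGen (i j : ι) : FreeAlgebra k (YGen ι) := FreeAlgebra.ι k (Sum.inl (i, j))

/-- The free extra generator. -/
def eGen (i : ι) : FreeAlgebra k (YGen ι) := FreeAlgebra.ι k (Sum.inr i)

/-- Defining relations of `Y₋`: `R₁₂T₁T₂ = T₂T₁R₁₂` and `E₁T₂ = T₂E₁R₁₂`,
written in components. -/
inductive relMinus : FreeAlgebra k (YGen ι) → FreeAlgebra k (YGen ι) → Prop
  | rtt (i j m n : ι) : relMinus
      (∑ p : ι, ∑ q : ι, Rm (i, j) (p, q) • (tGen k ι p m * tGen k ι q n))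
      (∑ p : ι, ∑ q : ι, Rm (p, q) (m, n) • (tGen k ι j q * tGen k ι i p))
  | ret (j m n : ι) : relMinus
      (eGen k ι m * tGen k ι j n)
      (∑ p : ι, ∑ q : ι, Rm (p, q) (m, n) • (tGen k ι j q * eGen k ι p))

/-- Defining relations of `Y₊`: `R₁₂U₁U₂ = U₂U₁R₁₂` and `F₂U₁ = R₁₂U₁F₂`,
written in components. -/
inductive relPlus : FreeAlgebra k (YGen ι) → FreeAlgebra k (YGen ι) → Prop
  | ruu (i j m n : ι) : relPlus
      (∑ p : ι, ∑ q : ι, Rm (i, j) (p, q) • (tGen k ι p m * tGen k ι q n))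
      (∑ p : ι, ∑ q : ι, Rm (p, q) (m, n) • (tGen k ι j q * tGen k ι i p))
  | rfu (i j m : ι) : relPlus
      (eGen k ι j * tGen k ι i m)
      (∑ p : ι, ∑ q : ι, Rm (i, j) (p, q) • (tGen k ι p m * eGen k ι q))

/-- The Yang-Baxter bialgebra `Y₋` (generated by `t^i_j`, `E_i`). -/
abbrev Yminus := RingQuot (relMinus k ι Rm)

/-- The Yang-Baxter bialgebra `Y₊` (generated by `u^i_j`, `F^i`). -/
abbrev Yplus := RingQuot (relPlus k ι Rm)

/-- The generator `t^i_j` of `Y₋`. -/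
def tM (i j : ι) : Yminus k ι Rm := RingQuot.mkAlgHom k (relMinus k ι Rm) (tGen k ι i j)

/-- The generator `E_i` of `Y₋`. -/
def eM (i : ι) : Yminus k ι Rm := RingQuot.mkAlgHom k (relMinus k ι Rm) (eGen k ι i)

/-- The generator `u^i_j` of `Y₊`. -/
def uP (i j : ι) : Yplus k ι Rm := RingQuot.mkAlgHom k (relPlus k ι Rm) (tGen k ι i j)

/-- The generator `F^i` of `Y₊`. -/
def fP (i : ι) : Yplus k ι Rm := RingQuot.mkAlgHom k (relPlus k ι Rm) (eGen k ι i)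

end YangBaxterAlgebra

section Stmt11Aux

variable {k : Type*} [Field k] {ι : Type*} [Fintype ι] [DecidableEq ι]
variable (Rm : Matrix (ι × ι) (ι × ι) k)
variable {C : Type*} [Ring C] [Algebra k C]

private theorem sum_comm4 {M : Type*} [AddCommMonoid M] (f : ι → ι → ι → ι → M) :
    ∑ p : ι, ∑ q : ι, ∑ a : ι, ∑ b : ι, f p q a b
      = ∑ a : ι, ∑ b : ι, ∑ p : ι, ∑ q : ι, f p q a b :=
  calc ∑ p : ι, ∑ q : ι, ∑ a : ι, ∑ b : ι, f p q a b
      = ∑ p : ι, ∑ a : ι, ∑ b : ι, ∑ q : ι, f p q a b :=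
        Finset.sum_congr rfl fun p _ => by
          rw [Finset.sum_comm]
          exact Finset.sum_congr rfl fun a _ => Finset.sum_comm
    _ = ∑ a : ι, ∑ p : ι, ∑ b : ι, ∑ q : ι, f p q a b := Finset.sum_comm
    _ = ∑ a : ι, ∑ b : ι, ∑ p : ι, ∑ q : ι, f p q a b :=
        Finset.sum_congr rfl fun a _ => Finset.sum_comm

private theorem sum_comm3 {M : Type*} [AddCommMonoid M] (f : ι → ι → ι → M) :
    ∑ b : ι, ∑ p : ι, ∑ q : ι, f b p q = ∑ p : ι, ∑ q : ι, ∑ b : ι, f b p q :=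
  calc ∑ b : ι, ∑ p : ι, ∑ q : ι, f b p q
      = ∑ p : ι, ∑ b : ι, ∑ q : ι, f b p q := Finset.sum_comm
    _ = ∑ p : ι, ∑ q : ι, ∑ b : ι, f b p q :=
        Finset.sum_congr rfl fun p _ => Finset.sum_comm

open TensorProduct in
private theorem mul_expand (w x y z : ι → C) :
    (∑ a : ι, w a ⊗ₜ[k] x a) * (∑ b : ι, y b ⊗ₜ[k] z b)
      = ∑ a : ι, ∑ b : ι, (w a * y b) ⊗ₜ[k] (x a * z b) := by
  rw [Fintype.sum_mul_sum]
  simp [Algebra.TensorProduct.tmul_mul_tmul]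

open TensorProduct in
private theorem key1 (t : ι → ι → C)
    (hT : ∀ i j m n : ι,
      (∑ p : ι, ∑ q : ι, Rm (i, j) (p, q) • (t p m * t q n))
        = ∑ p : ι, ∑ q : ι, Rm (p, q) (m, n) • (t j q * t i p))
    (i j a b : ι) (z : C) :
    (∑ p : ι, ∑ q : ι, Rm (i, j) (p, q) • ((t p a * t q b) ⊗ₜ[k] z))
      = ∑ p : ι, ∑ q : ι, Rm (p, q) (a, b) • ((t j q * t i p) ⊗ₜ[k] z) := by
  have h := congrArg (fun x : C => x ⊗ₜ[k] z) (hT i j a b)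
  simpa [TensorProduct.sum_tmul, TensorProduct.smul_tmul'] using h

open TensorProduct in
private theorem key2 (t : ι → ι → C)
    (hT : ∀ i j m n : ι,
      (∑ p : ι, ∑ q : ι, Rm (i, j) (p, q) • (t p m * t q n))
        = ∑ p : ι, ∑ q : ι, Rm (p, q) (m, n) • (t j q * t i p))
    (c d m n : ι) (z : C) :
    (∑ p : ι, ∑ q : ι, Rm (c, d) (p, q) • (z ⊗ₜ[k] (t p m * t q n)))
      = ∑ p : ι, ∑ q : ι, Rm (p, q) (m, n) • (z ⊗ₜ[k] (t d q * t c p)) := by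
  have h := congrArg (fun x : C => z ⊗ₜ[k] x) (hT c d m n)
  simpa [TensorProduct.tmul_sum, TensorProduct.tmul_smul] using h

open TensorProduct in
private theorem lemA (t : ι → ι → C)
    (hT : ∀ i j m n : ι,
      (∑ p : ι, ∑ q : ι, Rm (i, j) (p, q) • (t p m * t q n))
        = ∑ p : ι, ∑ q : ι, Rm (p, q) (m, n) • (t j q * t i p))
    (i j m n : ι) :
    (∑ p : ι, ∑ q : ι, Rm (i, j) (p, q) •
        ((∑ a : ι, t p a ⊗ₜ[k] t a m) * (∑ b : ι, t q b ⊗ₜ[k] t b n)))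
      = ∑ p : ι, ∑ q : ι, Rm (p, q) (m, n) •
        ((∑ a : ι, t j a ⊗ₜ[k] t a q) * (∑ b : ι, t i b ⊗ₜ[k] t b p)) := by
  calc (∑ p : ι, ∑ q : ι, Rm (i, j) (p, q) •
        ((∑ a : ι, t p a ⊗ₜ[k] t a m) * (∑ b : ι, t q b ⊗ₜ[k] t b n)))
      = ∑ p : ι, ∑ q : ι, ∑ a : ι, ∑ b : ι,
          Rm (i, j) (p, q) • ((t p a * t q b) ⊗ₜ[k] (t a m * t b n)) := by
        simp only [mul_expand, Finset.smul_sum]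
    _ = ∑ a : ι, ∑ b : ι, ∑ p : ι, ∑ q : ι,
          Rm (i, j) (p, q) • ((t p a * t q b) ⊗ₜ[k] (t a m * t b n)) := sum_comm4 _
    _ = ∑ a : ι, ∑ b : ι, ∑ c : ι, ∑ d : ι,
          Rm (c, d) (a, b) • ((t j d * t i c) ⊗ₜ[k] (t a m * t b n)) :=
        Finset.sum_congr rfl fun a _ => Finset.sum_congr rfl fun b _ =>
          key1 Rm t hT i j a b _
    _ = ∑ c : ι, ∑ d : ι, ∑ a : ι, ∑ b : ι,
          Rm (c, d) (a, b) • ((t j d * t i c) ⊗ₜ[k] (t a m * t b n)) := sum_comm4 _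
    _ = ∑ c : ι, ∑ d : ι, ∑ p : ι, ∑ q : ι,
          Rm (p, q) (m, n) • ((t j d * t i c) ⊗ₜ[k] (t d q * t c p)) :=
        Finset.sum_congr rfl fun c _ => Finset.sum_congr rfl fun d _ =>
          key2 Rm t hT c d m n _
    _ = ∑ p : ι, ∑ q : ι, ∑ c : ι, ∑ d : ι,
          Rm (p, q) (m, n) • ((t j d * t i c) ⊗ₜ[k] (t d q * t c p)) := sum_comm4 _
    _ = ∑ p : ι, ∑ q : ι, Rm (p, q) (m, n) •
          ((∑ a : ι, t j a ⊗ₜ[k] t a q) * (∑ b : ι, t i b ⊗ₜ[k] t b p)) := by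
        refine Finset.sum_congr rfl fun p _ => Finset.sum_congr rfl fun q _ => ?_
        rw [mul_expand, Finset.smul_sum]
        simp only [Finset.smul_sum]
        rw [Finset.sum_comm]

open TensorProduct in
private theorem lemB (t : ι → ι → C) (e : ι → C)
    (hT : ∀ i j m n : ι,
      (∑ p : ι, ∑ q : ι, Rm (i, j) (p, q) • (t p m * t q n))
        = ∑ p : ι, ∑ q : ι, Rm (p, q) (m, n) • (t j q * t i p))
    (hE : ∀ j m n : ι,
      e m * t j n = ∑ p : ι, ∑ q : ι, Rm (p, q) (m, n) • (t j q * e p))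
    (j m n : ι) :
    ((∑ a : ι, e a ⊗ₜ[k] t a m) + 1 ⊗ₜ[k] e m) * (∑ b : ι, t j b ⊗ₜ[k] t b n)
      = ∑ p : ι, ∑ q : ι, Rm (p, q) (m, n) •
          ((∑ a : ι, t j a ⊗ₜ[k] t a q) *
            ((∑ c : ι, e c ⊗ₜ[k] t c p) + 1 ⊗ₜ[k] e p)) := by
  have keyE1 : ∀ (a b : ι) (z : C),
      (e a * t j b) ⊗ₜ[k] z
        = ∑ p : ι, ∑ q : ι, Rm (p, q) (a, b) • ((t j q * e p) ⊗ₜ[k] z) := by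
    intro a b z
    have h := congrArg (fun x : C => x ⊗ₜ[k] z) (hE j a b)
    simpa [TensorProduct.sum_tmul, TensorProduct.smul_tmul'] using h
  have keyE2 : ∀ (b : ι) (z : C),
      z ⊗ₜ[k] (e m * t b n)
        = ∑ p : ι, ∑ q : ι, Rm (p, q) (m, n) • (z ⊗ₜ[k] (t b q * e p)) := by
    intro b z
    have h := congrArg (fun x : C => z ⊗ₜ[k] x) (hE b m n)
    simpa [TensorProduct.tmul_sum, TensorProduct.tmul_smul] using h
  have term1 :
      (∑ a : ι, e a ⊗ₜ[k] t a m) * (∑ b : ι, t j b ⊗ₜ[k] t b n)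
        = ∑ p : ι, ∑ q : ι, ∑ d : ι, ∑ c : ι,
            Rm (p, q) (m, n) • ((t j d * e c) ⊗ₜ[k] (t d q * t c p)) := by
    calc (∑ a : ι, e a ⊗ₜ[k] t a m) * (∑ b : ι, t j b ⊗ₜ[k] t b n)
        = ∑ a : ι, ∑ b : ι, (e a * t j b) ⊗ₜ[k] (t a m * t b n) := mul_expand _ _ _ _
      _ = ∑ a : ι, ∑ b : ι, ∑ c : ι, ∑ d : ι,
            Rm (c, d) (a, b) • ((t j d * e c) ⊗ₜ[k] (t a m * t b n)) :=
          Finset.sum_congr rfl fun a _ => Finset.sum_congr rfl fun b _ => keyE1 a b _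
      _ = ∑ c : ι, ∑ d : ι, ∑ a : ι, ∑ b : ι,
            Rm (c, d) (a, b) • ((t j d * e c) ⊗ₜ[k] (t a m * t b n)) := sum_comm4 _
      _ = ∑ c : ι, ∑ d : ι, ∑ p : ι, ∑ q : ι,
            Rm (p, q) (m, n) • ((t j d * e c) ⊗ₜ[k] (t d q * t c p)) :=
          Finset.sum_congr rfl fun c _ => Finset.sum_congr rfl fun d _ =>
            key2 Rm t hT c d m n _
      _ = ∑ p : ι, ∑ q : ι, ∑ c : ι, ∑ d : ι,
            Rm (p, q) (m, n) • ((t j d * e c) ⊗ₜ[k] (t d q * t c p)) := sum_comm4 _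
      _ = ∑ p : ι, ∑ q : ι, ∑ d : ι, ∑ c : ι,
            Rm (p, q) (m, n) • ((t j d * e c) ⊗ₜ[k] (t d q * t c p)) :=
          Finset.sum_congr rfl fun p _ => Finset.sum_congr rfl fun q _ =>
            Finset.sum_comm
  have term2 :
      (1 ⊗ₜ[k] e m : C ⊗[k] C) * (∑ b : ι, t j b ⊗ₜ[k] t b n)
        = ∑ p : ι, ∑ q : ι, ∑ b : ι,
            Rm (p, q) (m, n) • (t j b ⊗ₜ[k] (t b q * e p)) := by
    calc (1 ⊗ₜ[k] e m : C ⊗[k] C) * (∑ b : ι, t j b ⊗ₜ[k] t b n)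
        = ∑ b : ι, t j b ⊗ₜ[k] (e m * t b n) := by
          simp [Finset.mul_sum, Algebra.TensorProduct.tmul_mul_tmul]
      _ = ∑ b : ι, ∑ p : ι, ∑ q : ι,
            Rm (p, q) (m, n) • (t j b ⊗ₜ[k] (t b q * e p)) :=
          Finset.sum_congr rfl fun b _ => keyE2 b _
      _ = ∑ p : ι, ∑ q : ι, ∑ b : ι,
            Rm (p, q) (m, n) • (t j b ⊗ₜ[k] (t b q * e p)) := sum_comm3 _
  rw [add_mul, term1, term2]
  rw [← Finset.sum_add_distrib]
  refine Finset.sum_congr rfl fun p _ => ?_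
  rw [← Finset.sum_add_distrib]
  refine Finset.sum_congr rfl fun q _ => ?_
  rw [mul_add, smul_add, mul_expand, Finset.smul_sum]
  congr 1
  · exact Finset.sum_congr rfl fun d _ => by rw [Finset.smul_sum]
  · simp [Finset.sum_mul, Algebra.TensorProduct.tmul_mul_tmul, Finset.smul_sum, mul_one]

end Stmt11Aux


section Stmt11Defs

open TensorProduct

variable (k : Type*) [Field k] (ι : Type*) [Fintype ι] [DecidableEq ι]
variable (Rm : Matrix (ι × ι) (ι × ι) k)

private noncomputable def Dfree :
    FreeAlgebra k (YGen ι) →ₐ[k] (Yminus k ι Rm ⊗[k] Yminus k ι Rm) :=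
  FreeAlgebra.lift k fun g =>
    Sum.elim (fun ij => ∑ p : ι, tM k ι Rm ij.1 p ⊗ₜ[k] tM k ι Rm p ij.2)
      (fun i => (∑ p : ι, eM k ι Rm p ⊗ₜ[k] tM k ι Rm p i) + 1 ⊗ₜ[k] eM k ι Rm i) g

private theorem Dfree_t (i j : ι) :
    Dfree k ι Rm (tGen k ι i j) = ∑ p : ι, tM k ι Rm i p ⊗ₜ[k] tM k ι Rm p j := by
  simp [Dfree, tGen]

private theorem Dfree_e (i : ι) :
    Dfree k ι Rm (eGen k ι i)
      = (∑ p : ι, eM k ι Rm p ⊗ₜ[k] tM k ι Rm p i) + 1 ⊗ₜ[k] eM k ι Rm i := by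
  simp [Dfree, eGen]

private noncomputable def epsFree : FreeAlgebra k (YGen ι) →ₐ[k] k :=
  FreeAlgebra.lift k fun g =>
    Sum.elim (fun ij => if ij.1 = ij.2 then (1 : k) else 0) (fun _ => (0 : k)) g

private theorem epsFree_t (i j : ι) :
    epsFree k ι (tGen k ι i j) = if i = j then (1 : k) else 0 := by
  simp [epsFree, tGen]

private theorem epsFree_e (i : ι) : epsFree k ι (eGen k ι i) = 0 := by
  simp [epsFree, eGen]

end Stmt11Defs

/-- on the algebra `A = Y₋` defined by the relations
`R₁₂T₁T₂ = T₂T₁R₁₂`, `E₁T₂ = T₂E₁R₁₂`, the maps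
`Δ(t^i_j) = t^i_k ⊗ t^k_j`, `Δ(e_i) = e_k ⊗ t^k_i + 1 ⊗ e_i`,
`ε(t^i_j) = δ^i_j`, `ε(e_i) = 0` are well defined as algebra homomorphisms,
making `A` a bialgebra. -/
theorem stmt11 {k : Type*} [Field k] {ι : Type*} [Fintype ι] [DecidableEq ι]
    (Rm : Matrix (ι × ι) (ι × ι) k) (hinv : IsUnit Rm)
    (hYB : IsYangBaxter k ι Rm) :
    ∃ (D : Yminus k ι Rm →ₐ[k] (Yminus k ι Rm ⊗[k] Yminus k ι Rm))
      (E : Yminus k ι Rm →ₐ[k] k),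
      (∀ i j : ι, D (tM k ι Rm i j) = ∑ p : ι, tM k ι Rm i p ⊗ₜ[k] tM k ι Rm p j) ∧
      (∀ i : ι, D (eM k ι Rm i) =
        (∑ p : ι, eM k ι Rm p ⊗ₜ[k] tM k ι Rm p i) + 1 ⊗ₜ[k] eM k ι Rm i) ∧
      (∀ i j : ι, E (tM k ι Rm i j) = if i = j then 1 else 0) ∧
      (∀ i : ι, E (eM k ι Rm i) = 0) := by
  classical
  have hTq : ∀ i j m n : ι,
      (∑ p : ι, ∑ q : ι, Rm (i, j) (p, q) • (tM k ι Rm p m * tM k ι Rm q n))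
        = ∑ p : ι, ∑ q : ι, Rm (p, q) (m, n) • (tM k ι Rm j q * tM k ι Rm i p) := by
    intro i j m n
    have h := RingQuot.mkAlgHom_rel k (relMinus.rtt (Rm := Rm) i j m n)
    simpa [tM, map_sum, _root_.map_smul, _root_.map_mul] using h
  have hEq : ∀ j m n : ι, eM k ι Rm m * tM k ι Rm j n
      = ∑ p : ι, ∑ q : ι, Rm (p, q) (m, n) • (tM k ι Rm j q * eM k ι Rm p) := by
    intro j m n
    have h := RingQuot.mkAlgHom_rel k (relMinus.ret (Rm := Rm) j m n)
    simpa [tM, eM, map_sum, _root_.map_smul, _root_.map_mul] using h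
  have hD : ∀ ⦃x y⦄, relMinus k ι Rm x y → Dfree k ι Rm x = Dfree k ι Rm y := by
    intro x y h
    induction h with
    | rtt i j m n =>
        simp only [map_sum, _root_.map_smul, _root_.map_mul, Dfree_t]
        exact lemA Rm _ hTq i j m n
    | ret j m n =>
        simp only [map_sum, _root_.map_smul, _root_.map_mul, Dfree_t, Dfree_e]
        exact lemB Rm _ _ hTq hEq j m n
  have hEps : ∀ ⦃x y⦄, relMinus k ι Rm x y → epsFree k ι x = epsFree k ι y := by
    intro x y h
    induction h with
    | rtt i j m n =>
        simp only [map_sum, _root_.map_smul, _root_.map_mul, epsFree_t, smul_eq_mul]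
        simp [mul_ite, ite_mul, Finset.sum_ite_eq, Finset.sum_ite_eq']
    | ret j m n =>
        simp only [map_sum, _root_.map_smul, _root_.map_mul, epsFree_t, epsFree_e, smul_eq_mul]
        simp
  refine ⟨RingQuot.liftAlgHom k ⟨Dfree k ι Rm, hD⟩,
    RingQuot.liftAlgHom k ⟨epsFree k ι, hEps⟩, ?_, ?_, ?_, ?_⟩
  · intro i j
    simp [tM, RingQuot.liftAlgHom_mkAlgHom_apply, Dfree_t]
  · intro i
    simp [tM, eM, RingQuot.liftAlgHom_mkAlgHom_apply, Dfree_e]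
  · intro i j
    simp [tM, RingQuot.liftAlgHom_mkAlgHom_apply, epsFree_t]
  · intro i
    simp [eM, RingQuot.liftAlgHom_mkAlgHom_apply, epsFree_e]
end

section
/- In the setting of the skew-paired Yang–Baxter bialgebras Y₊ (generated by u^i_j, F^i) and Y₋ (generated by t^i_j, E_i) with pairing ⟨U, T⟩ = R, ⟨F, E⟩ = 1 (identity matrix) and all other pairings of generators zero, extended by ⟨xy, a⟩ = ⟨x ⊗ y, Δ(a)⟩ and ⟨Δ(x), a ⊗ b⟩ = ⟨x, ba⟩, one has ⟨F^m F^n, E_i E_j⟩ = (B + 1)^{mn}_{ij}, where B^{ij}_{mn} = R^{ji}_{mn}. -/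
open TensorProduct Matrix

/-- The pairing induced on tensor squares by bilinear pairings:
`⟨x ⊗ y, a ⊗ b⟩ = ⟨x, a⟩⟨y, b⟩`. -/
noncomputable def tensorPairing {k A B : Type*} [CommRing k]
    [AddCommGroup A] [Module k A] [AddCommGroup B] [Module k B]
    (p q : B →ₗ[k] Module.Dual k A) :
    (B ⊗[k] B) →ₗ[k] Module.Dual k (A ⊗[k] A) :=
  TensorProduct.dualDistrib k A A ∘ₗ TensorProduct.map p q

section Pairing

variable {k : Type*} [Field k] {ι : Type*} [Fintype ι] [DecidableEq ι]
variable (Rm : Matrix (ι × ι) (ι × ι) k)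

/-- The hypotheses on the skew pairing `⟨·,·⟩ : Y₊ ⊗ Y₋ → k` of the
Yang-Baxter bialgebras: its values on generators `⟨U,T⟩ = R`, `⟨F,E⟩ = 1`,
`⟨1,T⟩ = ⟨U,1⟩ = 1`, all other pairings of generators zero, and the skew
pairing axioms with respect to the comultiplications `Dp`, `Dm`. -/
structure IsYBPairing
    (p : Yplus k ι Rm →ₗ[k] Module.Dual k (Yminus k ι Rm))
    (Dm : Yminus k ι Rm →ₐ[k] (Yminus k ι Rm ⊗[k] Yminus k ι Rm))
    (Dp : Yplus k ι Rm →ₐ[k] (Yplus k ι Rm ⊗[k] Yplus k ι Rm)) : Prop where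
  comul_t : ∀ i j : ι, Dm (tM k ι Rm i j) = ∑ q : ι, tM k ι Rm i q ⊗ₜ[k] tM k ι Rm q j
  comul_e : ∀ i : ι, Dm (eM k ι Rm i) =
    (∑ q : ι, eM k ι Rm q ⊗ₜ[k] tM k ι Rm q i) + 1 ⊗ₜ[k] eM k ι Rm i
  comul_u : ∀ i j : ι, Dp (uP k ι Rm i j) = ∑ q : ι, uP k ι Rm i q ⊗ₜ[k] uP k ι Rm q j
  comul_f : ∀ i : ι, Dp (fP k ι Rm i) =
    fP k ι Rm i ⊗ₜ[k] 1 + ∑ q : ι, uP k ι Rm i q ⊗ₜ[k] fP k ι Rm q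
  pair_ut : ∀ i j m n : ι, p (uP k ι Rm i j) (tM k ι Rm m n) = Rm (i, m) (j, n)
  pair_fe : ∀ i j : ι, p (fP k ι Rm i) (eM k ι Rm j) = if i = j then 1 else 0
  pair_one_t : ∀ i j : ι, p 1 (tM k ι Rm i j) = if i = j then 1 else 0
  pair_u_one : ∀ i j : ι, p (uP k ι Rm i j) 1 = if i = j then 1 else 0
  pair_one_one : p 1 1 = 1
  pair_f_one : ∀ i : ι, p (fP k ι Rm i) 1 = 0
  pair_one_e : ∀ i : ι, p 1 (eM k ι Rm i) = 0
  pair_ue : ∀ i j m : ι, p (uP k ι Rm i j) (eM k ι Rm m) = 0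
  pair_ft : ∀ i m n : ι, p (fP k ι Rm i) (tM k ι Rm m n) = 0
  skew_mul : ∀ (x y : Yplus k ι Rm) (a : Yminus k ι Rm),
    p (x * y) a = tensorPairing p p (x ⊗ₜ[k] y) (Dm a)
  skew_comul : ∀ (x : Yplus k ι Rm) (a b : Yminus k ι Rm),
    tensorPairing p p (Dp x) (a ⊗ₜ[k] b) = p x (b * a)

end Pairing

section Aux

variable {k : Type*} [Field k] {ι : Type*} [Fintype ι] [DecidableEq ι]
variable {Rm : Matrix (ι × ι) (ι × ι) k}

lemma tp_apply {A B : Type*}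
    [AddCommGroup A] [Module k A] [AddCommGroup B] [Module k B]
    (p q : B →ₗ[k] Module.Dual k A) (x y : B) (a b : A) :
    tensorPairing p q (x ⊗ₜ[k] y) (a ⊗ₜ[k] b) = p x a * q y b := by
  simp [tensorPairing]

variable {p : Yplus k ι Rm →ₗ[k] Module.Dual k (Yminus k ι Rm)}
variable {Dm : Yminus k ι Rm →ₐ[k] (Yminus k ι Rm ⊗[k] Yminus k ι Rm)}
variable {Dp : Yplus k ι Rm →ₐ[k] (Yplus k ι Rm ⊗[k] Yplus k ι Rm)}

lemma pair_f_ee (hp : IsYBPairing Rm p Dm Dp) (m a b : ι) :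
    p (fP k ι Rm m) (eM k ι Rm a * eM k ι Rm b) = 0 := by
  rw [← hp.skew_comul (fP k ι Rm m) (eM k ι Rm b) (eM k ι Rm a), hp.comul_f]
  simp [tp_apply, hp.pair_one_e, hp.pair_ue]

lemma pair_f_te (hp : IsYBPairing Rm p Dm Dp) (m q i j : ι) :
    p (fP k ι Rm m) (tM k ι Rm q i * eM k ι Rm j) =
      (if m = j then 1 else 0) * (if q = i then 1 else 0) := by
  rw [← hp.skew_comul (fP k ι Rm m) (eM k ι Rm j) (tM k ι Rm q i), hp.comul_f]
  simp [tp_apply, hp.pair_fe, hp.pair_one_t, hp.pair_ue, hp.pair_ft]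

lemma pair_f_et (hp : IsYBPairing Rm p Dm Dp) (n i r j : ι) :
    p (fP k ι Rm n) (eM k ι Rm i * tM k ι Rm r j) = Rm (n, r) (i, j) := by
  rw [← hp.skew_comul (fP k ι Rm n) (tM k ι Rm r j) (eM k ι Rm i), hp.comul_f]
  simp [tp_apply, hp.pair_one_e, hp.pair_ut, hp.pair_fe, hp.pair_ft,
    Finset.sum_ite_eq']

end Aux

/-- in the skew-paired Yang-Baxter bialgebras,
`⟨F^m F^n, E_i E_j⟩ = (B + 1)^{mn}_{ij}` where `B^{ij}_{mn} = R^{ji}_{mn}`. -/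
theorem stmt12 {k : Type*} [Field k] {ι : Type*} [Fintype ι] [DecidableEq ι]
    (Rm : Matrix (ι × ι) (ι × ι) k) (hinv : IsUnit Rm)
    (hYB : IsYangBaxter k ι Rm)
    (p : Yplus k ι Rm →ₗ[k] Module.Dual k (Yminus k ι Rm))
    (Dm : Yminus k ι Rm →ₐ[k] (Yminus k ι Rm ⊗[k] Yminus k ι Rm))
    (Dp : Yplus k ι Rm →ₐ[k] (Yplus k ι Rm ⊗[k] Yplus k ι Rm))
    (hp : IsYBPairing Rm p Dm Dp) :
    ∀ m n i j : ι,
      p (fP k ι Rm m * fP k ι Rm n) (eM k ι Rm i * eM k ι Rm j) =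
        Rm (n, m) (i, j) + (if m = i ∧ n = j then 1 else 0) := by
  intro m n i j
  rw [hp.skew_mul, _root_.map_mul, hp.comul_e, hp.comul_e]
  rw [add_mul, mul_add, mul_add, Finset.sum_mul_sum]
  simp only [Finset.sum_mul, Finset.mul_sum, Algebra.TensorProduct.tmul_mul_tmul,
    one_mul, mul_one, map_add, map_sum]
  simp only [tp_apply, pair_f_ee hp, pair_f_te hp, pair_f_et hp, hp.pair_fe,
    hp.pair_f_one, zero_mul, mul_zero, Finset.sum_const_zero, add_zero, zero_add]
  rw [Finset.sum_eq_single m (fun b _ hb => by simp [Ne.symm hb]) (by simp [Finset.mem_univ]),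
    Finset.sum_eq_single m (fun b _ hb => by simp [Ne.symm hb]) (by simp [Finset.mem_univ])]
  rw [add_comm]
  by_cases h1 : m = i <;> by_cases h2 : n = j <;> simp [h1, h2]
end

section
/- In the same setting, for every N ≥ 1, the pairing of monomials in the F and E generators is given by the braided factorial: ⟨F^{q₁}···F^{q_N}, E_{a₁}···E_{a_N}⟩ = ([N!]_B)^{q₁···q_N}_{a₁···a_N}, where [N!]_B is defined recursively via the braided integers built from B^{ij}_{mn} = R^{ji}_{mn}. -/
open TensorProduct Matrix

section Braided

variable {k : Type*} [Field k] {ι : Type*} [Fintype ι] [DecidableEq ι]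

/-- The braid matrix `B` acting on tensor factors `i, i+1` (0-based) of the
`N`-fold tensor power (in components). -/
def Bop (B : Matrix (ι × ι) (ι × ι) k) (N i : ℕ) :
    Matrix (Fin N → ι) (Fin N → ι) k :=
  if h : i + 1 < N then
    fun f g =>
      B (f ⟨i, Nat.lt_of_succ_lt h⟩, f ⟨i + 1, h⟩)
          (g ⟨i, Nat.lt_of_succ_lt h⟩, g ⟨i + 1, h⟩) *
        ∏ j : Fin N,
          if (j : ℕ) = i ∨ (j : ℕ) = i + 1 then 1 else (if f j = g j then (1 : k) else 0)
  else 1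

/-- The descending products `1, B_{N-1}, B_{N-1}B_{N-2}, ...` (here `B_m` is the
braid matrix acting on factors `m, m+1`, 1-based). -/
def chainDesc (B : Matrix (ι × ι) (ι × ι) k) (N : ℕ) :
    ℕ → Matrix (Fin N → ι) (Fin N → ι) k
  | 0 => 1
  | m + 1 => chainDesc B N m * Bop B N (N - 2 - m)

/-- The braided integer `[N]_B = 1 + B_{N-1} + B_{N-1}B_{N-2} + ⋯ + B_{N-1}⋯B_1`. -/
def braidedInt (B : Matrix (ι × ι) (ι × ι) k) (N : ℕ) :
    Matrix (Fin N → ι) (Fin N → ι) k :=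
  ∑ m ∈ Finset.range N, chainDesc B N m

/-- Extension `M ↦ M ⊗ 1` of an operator on the `N`-fold tensor power to the
`(N+1)`-fold tensor power. -/
def extendLast {k : Type*} [Field k] {ι : Type*} [Fintype ι] [DecidableEq ι] {N : ℕ}
    (M : Matrix (Fin N → ι) (Fin N → ι) k) :
    Matrix (Fin (N + 1) → ι) (Fin (N + 1) → ι) k :=
  fun f g => M (Fin.init f) (Fin.init g) * (if f (Fin.last N) = g (Fin.last N) then 1 else 0)

/-- The braided factorial: `[0!]_B = 1`, `[N!]_B = ([(N-1)!]_B ⊗ 1) [N]_B`. -/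
def braidedFactorial (B : Matrix (ι × ι) (ι × ι) k) :
    (N : ℕ) → Matrix (Fin N → ι) (Fin N → ι) k
  | 0 => 1
  | N + 1 => extendLast (braidedFactorial B N) * braidedInt B (N + 1)

end Braided

/-! Split off the last `F`: the skew-pairing axiom gives `⟨x F^i, w⟩ = ⟨x ⊗ F^i, Δw⟩`, and
`Δ(E_{a₁}⋯E_{a_L})` is a sum over patterns `c : Fin L → Option ι` choosing, factor by factor,
the term `E_m ⊗ T^m_a` (`some m`) or `1 ⊗ E_a` (`none`). Since `ΔF = F ⊗ 1 + U ⊗ F`, pairing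
`F^i` with the right leg kills every pattern with two `none`s, and `⟨F`-word, `E`-word`⟩`
vanishes when the `E`-word is longer; so only patterns with exactly one `none`, at position
`j`, survive. For such a pattern the right leg `T⋯T E T⋯T` pairs with `F^i` to an entry of
`B_{N-1}⋯B_{j+1}`, the summand of `[N]_B` indexed by `j`, and induction on `N` with
`[N!]_B = ([N-1!]_B ⊗ 1)[N]_B` concludes. -/

theorem List.prod_ofFn_insertNth_one {M : Type*} [Monoid M] {n : ℕ} (j : Fin (n + 1))
    (f : Fin n → M) : (List.ofFn (Fin.insertNth j 1 f)).prod = (List.ofFn f).prod := by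
  induction n with
  | zero => simp [Fin.fin_one_eq_zero j, Fin.insertNth_zero']
  | succ n ih =>
    cases j using Fin.cases with
    | zero => simp [Fin.insertNth_zero']
    | succ j =>
      rw [← Fin.cons_self_tail f, Fin.insertNth_succ_cons, List.ofFn_cons, List.ofFn_cons,
        List.prod_cons, List.prod_cons, ih]

theorem Fintype.sum_fun_fin_succ {α M : Type*} [Fintype α] [AddCommMonoid M] {n : ℕ}
    (F : (Fin (n + 1) → α) → M) :
    ∑ g, F g = ∑ u : Fin n → α, ∑ x : α, F (Fin.snoc u x) := by
  rw [← (Fin.snocEquiv fun _ => α).sum_comp, Fintype.sum_prod_type_right]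
  rfl

theorem List.prod_ofFn_sum {A κ : Type*} [Semiring A] [Fintype κ] {n : ℕ} (f : Fin n → κ → A) :
    (List.ofFn fun s => ∑ o, f s o).prod =
      ∑ c : Fin n → κ, (List.ofFn fun s => f s (c s)).prod := by
  induction n with
  | zero => simp
  | succ n ih =>
    simp only [List.ofFn_succ', List.prod_concat, Fintype.sum_fun_fin_succ, Fin.snoc_castSucc,
      Fin.snoc_last]
    rw [ih, Finset.sum_mul_sum]

theorem Algebra.TensorProduct.prod_ofFn_tmul {R A B : Type*} [CommSemiring R] [Semiring A]
    [Algebra R A] [Semiring B] [Algebra R B] {n : ℕ} (f : Fin n → A) (g : Fin n → B) :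
    (List.ofFn fun s => f s ⊗ₜ[R] g s).prod = (List.ofFn f).prod ⊗ₜ[R] (List.ofFn g).prod := by
  induction n with
  | zero => simp [Algebra.TensorProduct.one_def]
  | succ n ih => simp [List.ofFn_succ, ih]

section OptionPatterns

variable {ι : Type*}

def insertNone {n : ℕ} (j : Fin (n + 1)) (m : Fin n → ι) : Fin (n + 1) → Option ι :=
  Fin.insertNth j none fun s => some (m s)

lemma insertNone_eq_none_iff {n : ℕ} {j s : Fin (n + 1)} {m : Fin n → ι} :
    insertNone j m s = none ↔ s = j := by
  cases s using Fin.succAboveCases j <;> simp [insertNone, Fin.succAbove_ne]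

lemma insertNone_succAbove {n : ℕ} (j : Fin (n + 1)) (m : Fin n → ι) (t : Fin n) :
    insertNone j m (j.succAbove t) = some (m t) := by
  simp [insertNone]

lemma insertNone_castSucc_snoc {n : ℕ} (j : Fin (n + 1)) (m : Fin n → ι) (x : ι) :
    insertNone j.castSucc (Fin.snoc m x) = Fin.snoc (insertNone j m) (some x) := by
  rw [insertNone, Fin.insertNth_eq_iff]
  refine ⟨by simp [insertNone], funext fun t => ?_⟩
  cases t using Fin.lastCases with
  | last => simp [Fin.removeNth]
  | cast t => simp [Fin.removeNth, insertNone]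

lemma insertNone_last {n : ℕ} (m : Fin n → ι) :
    insertNone (Fin.last n) m = Fin.snoc (fun s => some (m s)) none :=
  Fin.insertNth_last' _ _

lemma eq_some_or_eq_insertNone {n : ℕ} (c : Fin (n + 1) → Option ι)
    (hc : ∀ s t, c s = none → c t = none → s = t) :
    (∃ m : Fin (n + 1) → ι, c = fun s => some (m s)) ∨ ∃ j m, c = insertNone j m := by
  by_cases h0 : ∃ j, c j = none
  · obtain ⟨j, hj⟩ := h0
    choose m hm using fun t => Option.ne_none_iff_exists'.mp
      fun h => Fin.succAbove_ne j t (hc _ _ h hj)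
    refine Or.inr ⟨j, m, funext fun s => ?_⟩
    cases s using Fin.succAboveCases j <;> simp [insertNone, hj, hm]
  · simp only [not_exists] at h0
    choose m hm using fun s => Option.ne_none_iff_exists'.mp (h0 s)
    exact Or.inl ⟨m, funext hm⟩

variable [Fintype ι]

lemma sum_fun_option_eq_of_two_none {M : Type*} [AddCommMonoid M] {n : ℕ}
    (f : (Fin (n + 1) → Option ι) → M)
    (hf : ∀ c s t, s ≠ t → c s = none → c t = none → f c = 0) :
    ∑ c, f c = ∑ m : Fin (n + 1) → ι, f (fun s => some (m s)) +
      ∑ j, ∑ m : Fin n → ι, f (insertNone j m) := by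
  let e : (Fin (n + 1) → ι) ⊕ (Fin (n + 1) × (Fin n → ι)) → (Fin (n + 1) → Option ι) :=
    Sum.elim (fun m s => some (m s)) fun jm => insertNone jm.1 jm.2
  have he : Function.Injective e := by
    rintro (m | ⟨j, m⟩) (m' | ⟨j', m'⟩) h
    · simpa [e, funext_iff] using h
    · simpa [e, insertNone] using congrFun h j'
    · simpa [e, insertNone] using congrFun h j
    · obtain rfl : j = j' :=
        insertNone_eq_none_iff.mp (by simpa [e, insertNone] using (congrFun h j).symm)
      obtain rfl : m = m' := funext fun t => by
        simpa [e, insertNone_succAbove] using congrFun h (j.succAbove t)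
      rfl
  have hrange (c) (hc : c ∉ Set.range e) : f c = 0 := by
    by_contra hfc
    rcases eq_some_or_eq_insertNone c fun s t hs ht =>
        not_not.mp fun hst => hfc (hf c s t hst hs ht) with ⟨m, rfl⟩ | ⟨j, m, rfl⟩
    · exact hc ⟨Sum.inl m, rfl⟩
    · exact hc ⟨Sum.inr (j, m), rfl⟩
  rw [← Fintype.sum_of_injective e he _ f hrange (fun _ => rfl), Fintype.sum_sum_type,
    Fintype.sum_prod_type]
  rfl

end OptionPatterns

section BraidedFactorial

variable {k : Type*} [Field k] {ι : Type*} [DecidableEq ι]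

lemma Bop_apply_of_lt (B : Matrix (ι × ι) (ι × ι) k) {N i : ℕ} (h : i + 1 < N)
    (f g : Fin N → ι) :
    Bop B N i f g =
      B (f ⟨i, by omega⟩, f ⟨i + 1, h⟩) (g ⟨i, by omega⟩, g ⟨i + 1, h⟩) *
        if ∀ j : Fin N, (j : ℕ) ≠ i → (j : ℕ) ≠ i + 1 → f j = g j then 1 else 0 := by
  simp only [Bop, h, ↓reduceDIte]
  congr 1
  convert Fintype.prod_boole (M₀ := k)
    (p := fun j : Fin N => (j : ℕ) ≠ i → (j : ℕ) ≠ i + 1 → f j = g j) using 2 with j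
  split_ifs <;> grind

lemma Bop_snoc_snoc (B : Matrix (ι × ι) (ι × ι) k) {N : ℕ} (u v : Fin N → ι) (x y x' y' : ι) :
    Bop B (N + 2) N (Fin.snoc (Fin.snoc u x) y) (Fin.snoc (Fin.snoc v x') y') =
      B (x, y) (x', y') * if u = v then 1 else 0 := by
  have hN (j : Fin N) : (j : ℕ) ≠ N ∧ (j : ℕ) ≠ N + 1 := by omega
  rw [Bop_apply_of_lt B (by omega)]
  simp [Fin.forall_fin_succ', funext_iff, Fin.snoc, hN]

variable [Fintype ι]

lemma extendLast_apply_snoc {N : ℕ} (M : Matrix (Fin N → ι) (Fin N → ι) k)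
    (u v : Fin N → ι) (x y : ι) :
    extendLast M (Fin.snoc u x) (Fin.snoc v y) = M u v * if x = y then 1 else 0 := by
  simp [extendLast]

lemma extendLast_one {N : ℕ} : extendLast (1 : Matrix (Fin N → ι) (Fin N → ι) k) = 1 := by
  ext f g
  rw [← Fin.snoc_init_self f, ← Fin.snoc_init_self g, extendLast_apply_snoc, Matrix.one_apply,
    Matrix.one_apply, ite_zero_mul_ite_zero, mul_one]
  exact if_congr (Fin.snoc_inj (α := fun _ => ι)).symm rfl rfl

lemma extendLast_mul {N : ℕ} (M M' : Matrix (Fin N → ι) (Fin N → ι) k) :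
    extendLast (M * M') = extendLast M * extendLast M' := by
  ext f g
  rw [← Fin.snoc_init_self f, ← Fin.snoc_init_self g, Matrix.mul_apply, Fintype.sum_fun_fin_succ]
  simp only [extendLast_apply_snoc, Matrix.mul_apply, Finset.sum_mul]
  refine Finset.sum_congr rfl fun u _ => ?_
  rw [Finset.sum_eq_single (f (Fin.last N))]
  · simp
  · intro x _ hx
    simp [Ne.symm hx]
  · simp

lemma Bop_succ_eq_extendLast (B : Matrix (ι × ι) (ι × ι) k) {N i : ℕ} (h : i + 1 < N) :
    Bop B (N + 1) i = extendLast (Bop B N i) := by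
  ext f g
  have hi : N ≠ i := by omega
  have hi' : N ≠ i + 1 := by omega
  rw [Bop_apply_of_lt B (by omega), extendLast, Bop_apply_of_lt B h, mul_assoc,
    ite_zero_mul_ite_zero, one_mul]
  simp only [Fin.forall_fin_succ', Fin.val_castSucc, Fin.val_last, ne_eq, hi, hi',
    not_false_eq_true, forall_const]
  rfl

lemma chainDesc_succ_eq_Bop_mul_extendLast (B : Matrix (ι × ι) (ι × ι) k) {N t : ℕ}
    (ht : t ≤ N) :
    chainDesc B (N + 2) (t + 1) = Bop B (N + 2) N * extendLast (chainDesc B (N + 1) t) := by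
  induction t with
  | zero => simp [chainDesc, extendLast_one]
  | succ t ih =>
    rw [chainDesc, ih (by omega), mul_assoc, show N + 2 - 2 - (t + 1) = N - (t + 1) by omega,
      Bop_succ_eq_extendLast B (N := N + 1) (i := N - (t + 1)) (by omega), ← extendLast_mul,
      chainDesc,
      show N + 1 - 2 - t = N - (t + 1) by omega]

lemma Bop_mul_extendLast_apply_snoc (B : Matrix (ι × ι) (ι × ι) k) {N : ℕ}
    (M : Matrix (Fin (N + 1) → ι) (Fin (N + 1) → ι) k) (u : Fin N → ι) (x y : ι)
    (b : Fin (N + 1) → ι) (z : ι) :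
    (Bop B (N + 2) N * extendLast M) (Fin.snoc (Fin.snoc u x) y) (Fin.snoc b z) =
      ∑ r, B (x, y) (r, z) * M (Fin.snoc u r) b := by
  simp [Matrix.mul_apply, Fintype.sum_fun_fin_succ, Bop_snoc_snoc, extendLast_apply_snoc, ite_mul,
    Finset.sum_ite_eq']

lemma braidedInt_apply (B : Matrix (ι × ι) (ι × ι) k) (N : ℕ) (f g : Fin (N + 1) → ι) :
    braidedInt B (N + 1) f g = ∑ j : Fin (N + 1), chainDesc B (N + 1) (N - j) f g := by
  rw [braidedInt, Matrix.sum_apply, ← Finset.sum_range_reflect, ← Fin.sum_univ_eq_sum_range]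
  rfl

lemma braidedFactorial_succ_apply_snoc (B : Matrix (ι × ι) (ι × ι) k) {N : ℕ}
    (q : Fin N → ι) (i : ι) (a : Fin (N + 1) → ι) :
    braidedFactorial B (N + 1) (Fin.snoc q i) a =
      ∑ j : Fin (N + 1), ∑ m : Fin N → ι,
        braidedFactorial B N q m * chainDesc B (N + 1) (N - j) (Fin.snoc m i) a := by
  rw [braidedFactorial, Matrix.mul_apply, Fintype.sum_fun_fin_succ]
  simp [extendLast_apply_snoc, braidedInt_apply, Finset.mul_sum]
  exact Finset.sum_comm

end BraidedFactorial

theorem tensorPairing_tmul {k A B : Type*} [CommRing k]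
    [AddCommGroup A] [Module k A] [AddCommGroup B] [Module k B]
    (p q : B →ₗ[k] Module.Dual k A) (x y : B) (a b : A) :
    tensorPairing p q (x ⊗ₜ[k] y) (a ⊗ₜ[k] b) = p x a * q y b := by
  simp [tensorPairing]

section Pairing

variable {k : Type*} [Field k] {ι : Type*} [Fintype ι]
variable (Rm : Matrix (ι × ι) (ι × ι) k)

def eWord {n : ℕ} (a : Fin n → ι) : Yminus k ι Rm :=
  (List.ofFn fun s => eM k ι Rm (a s)).prod

def fWord {n : ℕ} (q : Fin n → ι) : Yplus k ι Rm :=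
  (List.ofFn fun s => fP k ι Rm (q s)).prod

/- `Δ(E_b) = ∑ₒ comulLeft o ⊗ comulRight o b`: the index `some m` labels `E_m ⊗ T^m_b` and
`none` labels `1 ⊗ E_b`. -/
def comulLeft (o : Option ι) : Yminus k ι Rm :=
  o.elim 1 (eM k ι Rm)

def comulRight (o : Option ι) (b : ι) : Yminus k ι Rm :=
  o.elim (eM k ι Rm b) fun m => tM k ι Rm m b

def comulLeftWord {n : ℕ} (c : Fin n → Option ι) : Yminus k ι Rm :=
  (List.ofFn fun s => comulLeft Rm (c s)).prod

def comulRightWord {n : ℕ} (c : Fin n → Option ι) (a : Fin n → ι) : Yminus k ι Rm :=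
  (List.ofFn fun s => comulRight Rm (c s) (a s)).prod

variable {Rm}

lemma fWord_snoc {n : ℕ} (q : Fin n → ι) (i : ι) :
    fWord Rm (Fin.snoc q i) = fWord Rm q * fP k ι Rm i := by
  simp only [fWord, List.ofFn_succ', List.prod_concat, Fin.snoc_castSucc, Fin.snoc_last]

lemma comulRightWord_snoc {n : ℕ} (c : Fin n → Option ι) (o : Option ι) (a : Fin n → ι)
    (b : ι) :
    comulRightWord Rm (Fin.snoc c o) (Fin.snoc a b) =
      comulRightWord Rm c a * comulRight Rm o b := by
  simp only [comulRightWord, List.ofFn_succ', List.prod_concat, Fin.snoc_castSucc, Fin.snoc_last]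

lemma comulLeftWord_some {n : ℕ} (m : Fin n → ι) :
    comulLeftWord Rm (fun s => some (m s)) = eWord Rm m :=
  rfl

lemma comulLeftWord_insertNone {n : ℕ} (j : Fin (n + 1)) (m : Fin n → ι) :
    comulLeftWord Rm (insertNone j m) = eWord Rm m := by
  have h : (fun s => comulLeft Rm (insertNone j m s)) =
      Fin.insertNth j 1 fun t => eM k ι Rm (m t) := by
    rw [Fin.eq_insertNth_iff]
    refine ⟨by simp [insertNone, comulLeft], funext fun t => ?_⟩
    simp [Fin.removeNth_apply, insertNone, comulLeft]
  rw [comulLeftWord, h, List.prod_ofFn_insertNth_one, eWord]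

variable [DecidableEq ι]
variable {p : Yplus k ι Rm →ₗ[k] Module.Dual k (Yminus k ι Rm)}
variable {Dm : Yminus k ι Rm →ₐ[k] (Yminus k ι Rm ⊗[k] Yminus k ι Rm)}
variable {Dp : Yplus k ι Rm →ₐ[k] (Yplus k ι Rm ⊗[k] Yplus k ι Rm)}
variable (hp : IsYBPairing Rm p Dm Dp)
include hp

lemma IsYBPairing.comul_eM_eq_sum_option (b : ι) :
    Dm (eM k ι Rm b) = ∑ o, comulLeft Rm o ⊗ₜ[k] comulRight Rm o b := by
  rw [hp.comul_e, Fintype.sum_option, add_comm]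
  rfl

lemma IsYBPairing.comul_eWord {n : ℕ} (a : Fin n → ι) :
    Dm (eWord Rm a) = ∑ c, comulLeftWord Rm c ⊗ₜ[k] comulRightWord Rm c a := by
  simp only [eWord, map_list_prod, List.map_ofFn, Function.comp_def, hp.comul_eM_eq_sum_option,
    List.prod_ofFn_sum, Algebra.TensorProduct.prod_ofFn_tmul]
  rfl

lemma IsYBPairing.pair_one_mul (a b : Yminus k ι Rm) : p 1 (a * b) = p 1 a * p 1 b := by
  rw [← hp.skew_comul, map_one, Algebra.TensorProduct.one_def, tensorPairing_tmul, mul_comm]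

def IsYBPairing.pairOne : Yminus k ι Rm →* k where
  toFun := p 1
  map_one' := hp.pair_one_one
  map_mul' := hp.pair_one_mul

lemma IsYBPairing.pair_one_comulRightWord {n : ℕ} (c : Fin n → Option ι) (a : Fin n → ι) :
    p 1 (comulRightWord Rm c a) = if ∀ s, c s = some (a s) then 1 else 0 := by
  change hp.pairOne _ = _
  rw [comulRightWord, map_list_prod, List.map_ofFn, List.prod_ofFn]
  convert Fintype.prod_boole (M₀ := k) (p := fun s => c s = some (a s)) using 2 with s
  rcases hcs : c s with _ | m <;>
    simp [hcs, IsYBPairing.pairOne, comulRight, hp.pair_one_e, hp.pair_one_t]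

lemma IsYBPairing.pair_one_eWord {n : ℕ} (a : Fin (n + 1) → ι) : p 1 (eWord Rm a) = 0 := by
  change hp.pairOne _ = _
  rw [eWord, map_list_prod, List.map_ofFn, List.prod_ofFn]
  exact Finset.prod_eq_zero (Finset.mem_univ 0) (hp.pair_one_e _)

lemma IsYBPairing.pair_fP_mul_tM (i m b : ι) (w : Yminus k ι Rm) :
    p (fP k ι Rm i) (w * tM k ι Rm m b) = ∑ r, Rm (i, m) (r, b) * p (fP k ι Rm r) w := by
  rw [← hp.skew_comul, hp.comul_f]
  simp [tensorPairing_tmul, hp.pair_ft, hp.pair_ut]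

lemma IsYBPairing.pair_fP_mul_eM (i b : ι) (w : Yminus k ι Rm) :
    p (fP k ι Rm i) (w * eM k ι Rm b) = (if i = b then 1 else 0) * p 1 w := by
  rw [← hp.skew_comul, hp.comul_f]
  simp [tensorPairing_tmul, hp.pair_fe, hp.pair_ue]

lemma IsYBPairing.pair_fP_comulRightWord_of_two_none {n : ℕ} (i : ι) (c : Fin n → Option ι)
    (a : Fin n → ι) {s t : Fin n} (hst : s ≠ t) (hs : c s = none) (ht : c t = none) :
    p (fP k ι Rm i) (comulRightWord Rm c a) = 0 := by
  induction n generalizing i with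
  | zero => exact s.elim0
  | succ n ih =>
    induction c using Fin.snocCases with | snoc c o =>
    induction a using Fin.snocCases with | snoc a b =>
    rcases o with _ | m
    · have hc : ∃ u, c u = none := by
        cases s using Fin.lastCases with
        | cast s => exact ⟨s, by simpa using hs⟩
        | last =>
          cases t using Fin.lastCases with
          | cast t => exact ⟨t, by simpa using ht⟩
          | last => exact absurd rfl hst
      obtain ⟨u, hu⟩ := hc
      have hnot : ¬ ∀ s, c s = some (a s) := fun h => by simp [h] at hu
      rw [comulRightWord_snoc, comulRight, Option.elim_none, hp.pair_fP_mul_eM,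
        hp.pair_one_comulRightWord, if_neg hnot, mul_zero]
    · cases s using Fin.lastCases with
      | last => simp at hs
      | cast s =>
        cases t using Fin.lastCases with
        | last => simp at ht
        | cast t =>
          rw [comulRightWord_snoc, comulRight, Option.elim_some, hp.pair_fP_mul_tM]
          simp [ih _ c a (Fin.castSucc_injective _ |>.ne_iff.mp hst) (by simpa using hs)
            (by simpa using ht)]

lemma IsYBPairing.pair_fP_comulRightWord_insertNone_last (B : Matrix (ι × ι) (ι × ι) k) {n : ℕ}
    (m : Fin n → ι) (i : ι) (a : Fin (n + 1) → ι) :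
    p (fP k ι Rm i) (comulRightWord Rm (insertNone (Fin.last n) m) a) =
      chainDesc B (n + 1) 0 (Fin.snoc m i) a := by
  induction a using Fin.snocCases with | snoc a b =>
  rw [insertNone_last, comulRightWord_snoc, comulRight, Option.elim_none, hp.pair_fP_mul_eM,
    hp.pair_one_comulRightWord, chainDesc, Matrix.one_apply, ite_zero_mul_ite_zero, one_mul]
  exact if_congr (by simp [Fin.snoc_inj (α := fun _ => ι), funext_iff, and_comm]) rfl rfl

lemma IsYBPairing.pair_fP_comulRightWord_insertNone (B : Matrix (ι × ι) (ι × ι) k)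
    (hB : B = fun a b => Rm (a.2, a.1) b) {n : ℕ} (j : Fin (n + 1)) (m : Fin n → ι) (i : ι)
    (a : Fin (n + 1) → ι) :
    p (fP k ι Rm i) (comulRightWord Rm (insertNone j m) a) =
      chainDesc B (n + 1) (n - j) (Fin.snoc m i) a := by
  induction n generalizing i with
  | zero =>
    obtain rfl : j = Fin.last 0 := Fin.fin_one_eq_zero j
    exact hp.pair_fP_comulRightWord_insertNone_last B m i a
  | succ n ih =>
    cases j using Fin.lastCases with
    | last => simpa using hp.pair_fP_comulRightWord_insertNone_last B m i a
    | cast j =>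
      induction m using Fin.snocCases with | snoc m x =>
      induction a using Fin.snocCases with | snoc a b =>
      have hj : n + 1 - (j.castSucc : ℕ) = n - j + 1 := by simp; omega
      rw [insertNone_castSucc_snoc, comulRightWord_snoc, comulRight, Option.elim_some,
        hp.pair_fP_mul_tM, hj, chainDesc_succ_eq_Bop_mul_extendLast B (by omega),
        Bop_mul_extendLast_apply_snoc]
      subst hB
      simp [ih]

lemma IsYBPairing.pair_fWord_snoc_eWord {n L : ℕ} (q : Fin n → ι) (i : ι)
    (a : Fin (L + 1) → ι) :
    p (fWord Rm (Fin.snoc q i)) (eWord Rm a) =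
      ∑ m : Fin (L + 1) → ι, p (fWord Rm q) (eWord Rm m) *
          p (fP k ι Rm i) (comulRightWord Rm (fun s => some (m s)) a) +
        ∑ j, ∑ m : Fin L → ι, p (fWord Rm q) (eWord Rm m) *
          p (fP k ι Rm i) (comulRightWord Rm (insertNone j m) a) := by
  rw [fWord_snoc, hp.skew_mul, hp.comul_eWord, map_sum]
  simp only [tensorPairing_tmul]
  rw [sum_fun_option_eq_of_two_none _ fun c s t hst hs ht => by
    rw [hp.pair_fP_comulRightWord_of_two_none i c a hst hs ht, mul_zero]]
  simp only [comulLeftWord_some, comulLeftWord_insertNone]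

lemma IsYBPairing.pair_fWord_eWord_of_lt {n L : ℕ} (q : Fin n → ι) (a : Fin L → ι)
    (hnL : n < L) : p (fWord Rm q) (eWord Rm a) = 0 := by
  induction n generalizing L with
  | zero =>
    obtain ⟨L, rfl⟩ : ∃ L', L = L' + 1 := ⟨L - 1, by omega⟩
    simpa [fWord] using hp.pair_one_eWord a
  | succ n ih =>
    obtain ⟨L, rfl⟩ : ∃ L', L = L' + 1 := ⟨L - 1, by omega⟩
    induction q using Fin.snocCases with | snoc q i =>
    have hL : n < L := by omega
    simp [hp.pair_fWord_snoc_eWord, ih _ _ hL, ih _ _ (hL.trans (Nat.lt_succ_self L))]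

lemma IsYBPairing.pair_fWord_eWord (B : Matrix (ι × ι) (ι × ι) k)
    (hB : B = fun a b => Rm (a.2, a.1) b) {n : ℕ} (q a : Fin n → ι) :
    p (fWord Rm q) (eWord Rm a) = braidedFactorial B n q a := by
  induction n with
  | zero =>
    obtain rfl : q = a := Subsingleton.elim _ _
    simp [fWord, eWord, hp.pair_one_one, braidedFactorial]
  | succ n ih =>
    induction q using Fin.snocCases with | snoc q i =>
    rw [hp.pair_fWord_snoc_eWord, braidedFactorial_succ_apply_snoc]
    simp [hp.pair_fWord_eWord_of_lt _ _ (Nat.lt_succ_self n), ih,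
      hp.pair_fP_comulRightWord_insertNone B hB]

end Pairing

theorem stmt13_general {k : Type*} [Field k] {ι : Type*} [Fintype ι] [DecidableEq ι]
    (Rm : Matrix (ι × ι) (ι × ι) k)
    (p : Yplus k ι Rm →ₗ[k] Module.Dual k (Yminus k ι Rm))
    (Dm : Yminus k ι Rm →ₐ[k] (Yminus k ι Rm ⊗[k] Yminus k ι Rm))
    (Dp : Yplus k ι Rm →ₐ[k] (Yplus k ι Rm ⊗[k] Yplus k ι Rm))
    (hp : IsYBPairing Rm p Dm Dp)
    (B : Matrix (ι × ι) (ι × ι) k) (hB : B = fun a b => Rm (a.2, a.1) b) :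
    ∀ N : ℕ, 1 ≤ N → ∀ q a : Fin N → ι,
      p ((List.ofFn fun s => fP k ι Rm (q s)).prod)
          ((List.ofFn fun s => eM k ι Rm (a s)).prod) =
        braidedFactorial B N q a :=
  fun _ _ q a => hp.pair_fWord_eWord B hB q a

/-- in the skew-paired Yang-Baxter bialgebras, for every `N ≥ 1`
the pairing of monomials is the braided factorial:
`⟨F^{q₁}⋯F^{q_N}, E_{a₁}⋯E_{a_N}⟩ = ([N!]_B)^{q₁⋯q_N}_{a₁⋯a_N}`,
where `B^{ij}_{mn} = R^{ji}_{mn}`. -/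
theorem stmt13 {k : Type*} [Field k] {ι : Type*} [Fintype ι] [DecidableEq ι]
    (Rm : Matrix (ι × ι) (ι × ι) k) (hinv : IsUnit Rm)
    (hYB : IsYangBaxter k ι Rm)
    (p : Yplus k ι Rm →ₗ[k] Module.Dual k (Yminus k ι Rm))
    (Dm : Yminus k ι Rm →ₐ[k] (Yminus k ι Rm ⊗[k] Yminus k ι Rm))
    (Dp : Yplus k ι Rm →ₐ[k] (Yplus k ι Rm ⊗[k] Yplus k ι Rm))
    (hp : IsYBPairing Rm p Dm Dp)
    (B : Matrix (ι × ι) (ι × ι) k) (hB : B = fun a b => Rm (a.2, a.1) b) :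
    ∀ N : ℕ, 1 ≤ N → ∀ q a : Fin N → ι,
      p ((List.ofFn fun s => fP k ι Rm (q s)).prod)
          ((List.ofFn fun s => eM k ι Rm (a s)).prod) =
        braidedFactorial B N q a :=
  stmt13_general Rm p Dm Dp hp B hB
end
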